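/- Anisotropic Young estimate for the single-layer heat potential: for 1 < q < ∞ and g ∈ L^q(ℝ^{n−1} × (0,T)), the function w(x,t) = ∫₀^t ∫_{ℝ^{n−1}} Γ(x'−y', x_n, t−s) g(y',s) dy' ds satisfies ‖w‖_{L^q(ℝⁿ₊ × (0,T))} ≤ c T^{1/(2q)+1/2} ‖g‖_{L^q(ℝ^{n−1} × (0,T))} for some constant depending on n, q (in particular ≤ c max{1,T} T^{1/(2q)} ‖g‖). -/

import Mathlib

/-!
The potential is dominated by the positive integral operator with kernel
`K(x, t; y', s) = Γ(x' - y', x_n, t - s) 1_{s < t}`, so the Schur test applies: by Hölder,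
`‖K g‖_q ≤ A^{1/q'} B^{1/q} ‖g‖_q` with `A = sup ∫ K dy' ds` and `B = sup ∫ K dx dt`.
Integrating the Gaussian out in `x' - y'` leaves the one-dimensional kernel in `x_n`, whose time
integral is at most `√T` (so `A ≤ √T`) and whose integral over `x_n > 0` is `1/2` (so `B ≤ T`).
Hence `‖w‖_q ≤ T^{(1 - 1/q)/2} T^{1/q} ‖g‖_q = T^{1/(2q) + 1/2} ‖g‖_q`.
-/

open MeasureTheory Real
open scoped ENNReal

/-- The `(m+1)`-dimensional heat kernel evaluated at the spatial point `(z, x_n)`. -/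
noncomputable def heatKernelHalf (m : ℕ) (z : EuclideanSpace ℝ (Fin m)) (xn t : ℝ) : ℝ :=
  (4 * π * t) ^ (-((m : ℝ) + 1) / 2) * Real.exp (-(‖z‖ ^ 2 + xn ^ 2) / (4 * t))

section SchurTest

variable {α β : Type*} [MeasurableSpace α] [MeasurableSpace β] {μ : Measure α} {ν : Measure β}
  {p q : ℝ}

theorem ENNReal.rpow_lintegral_mul_le (hpq : p.HolderConjugate q) {k g : β → ℝ≥0∞}
    (hk : AEMeasurable k ν) (hg : AEMeasurable g ν) :
    (∫⁻ y, k y * g y ∂ν) ^ q ≤ (∫⁻ y, k y ∂ν) ^ (q / p) * ∫⁻ y, k y * g y ^ q ∂ν := by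
  have hp := hpq.pos
  have hq := hpq.symm.pos
  have split : ∀ y, k y * g y = k y ^ (1 / p) * (k y ^ (1 / q) * g y) := fun y => by
    rw [← mul_assoc, ← ENNReal.rpow_add_of_nonneg _ _ (by positivity) (by positivity),
      one_div, one_div, hpq.inv_add_inv_eq_one, ENNReal.rpow_one]
  have holder := ENNReal.lintegral_mul_le_Lp_mul_Lq ν hpq (hk.pow_const (1 / p))
    ((hk.pow_const (1 / q)).mul hg)
  simp only [Pi.mul_apply, ← split, ← ENNReal.rpow_mul, one_div_mul_cancel hp.ne',
    ENNReal.rpow_one, ENNReal.mul_rpow_of_nonneg _ _ hq.le,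
    one_div_mul_cancel hq.ne'] at holder
  calc (∫⁻ y, k y * g y ∂ν) ^ q
      ≤ ((∫⁻ y, k y ∂ν) ^ (1 / p) * (∫⁻ y, k y * g y ^ q ∂ν) ^ (1 / q)) ^ q :=
        ENNReal.rpow_le_rpow holder hq.le
    _ = (∫⁻ y, k y ∂ν) ^ (q / p) * ∫⁻ y, k y * g y ^ q ∂ν := by
        rw [ENNReal.mul_rpow_of_nonneg _ _ hq.le, ← ENNReal.rpow_mul, ← ENNReal.rpow_mul,
          one_div_mul_cancel hq.ne', ENNReal.rpow_one, one_div_mul_eq_div]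

variable [SFinite μ] [SFinite ν]

theorem lintegral_rpow_lintegral_mul_le_of_schur (hpq : p.HolderConjugate q)
    {K : α → β → ℝ≥0∞} (hK : Measurable (Function.uncurry K)) {G : β → ℝ≥0∞}
    (hG : AEMeasurable G ν) {A B : ℝ≥0∞} (hA : ∀ᵐ x ∂μ, ∫⁻ y, K x y ∂ν ≤ A)
    (hB : ∀ᵐ y ∂ν, ∫⁻ x, K x y ∂μ ≤ B) :
    ∫⁻ x, (∫⁻ y, K x y * G y ∂ν) ^ q ∂μ ≤ A ^ (q / p) * B * ∫⁻ y, G y ^ q ∂ν := by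
  have hq := hpq.symm.pos
  have hKG : AEMeasurable (fun xy : α × β => K xy.1 xy.2 * G xy.2 ^ q) (μ.prod ν) :=
    hK.aemeasurable.mul ((hG.pow_const q).comp_quasiMeasurePreserving
      Measure.quasiMeasurePreserving_snd)
  calc ∫⁻ x, (∫⁻ y, K x y * G y ∂ν) ^ q ∂μ
      ≤ ∫⁻ x, A ^ (q / p) * ∫⁻ y, K x y * G y ^ q ∂ν ∂μ := by
        refine lintegral_mono_ae (hA.mono fun x hx => ?_)
        refine (ENNReal.rpow_lintegral_mul_le hpq hK.of_uncurry_left.aemeasurable hG).trans ?_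
        gcongr
        exact div_nonneg hq.le hpq.pos.le
    _ = A ^ (q / p) * ∫⁻ y, (∫⁻ x, K x y ∂μ) * G y ^ q ∂ν := by
        rw [lintegral_const_mul'' _ hKG.lintegral_prod_right', lintegral_lintegral_swap hKG]
        simp_rw [lintegral_mul_const'' _ hK.of_uncurry_right.aemeasurable]
    _ ≤ A ^ (q / p) * B * ∫⁻ y, G y ^ q ∂ν := by
        rw [mul_assoc, ← lintegral_const_mul'' _ (hG.pow_const q)]
        gcongr _ * ?_
        exact lintegral_mono_ae (hB.mono fun y hy => by gcongr)

theorem eLpNorm_le_of_schur {ε ε' : Type*} [ENorm ε] [TopologicalSpace ε'] [ContinuousENorm ε']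
    (hpq : p.HolderConjugate q) {K : α → β → ℝ≥0∞} (hK : Measurable (Function.uncurry K))
    {f : α → ε} {g : β → ε'} (hg : AEStronglyMeasurable g ν)
    (hfg : ∀ᵐ x ∂μ, ‖f x‖ₑ ≤ ∫⁻ y, K x y * ‖g y‖ₑ ∂ν) {A B : ℝ≥0∞}
    (hA : ∀ᵐ x ∂μ, ∫⁻ y, K x y ∂ν ≤ A) (hB : ∀ᵐ y ∂ν, ∫⁻ x, K x y ∂μ ≤ B) :
    eLpNorm f (ENNReal.ofReal q) μ ≤
      A ^ (1 / p) * B ^ (1 / q) * eLpNorm g (ENNReal.ofReal q) ν := by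
  have hq := hpq.symm.pos
  have hq0 : ENNReal.ofReal q ≠ 0 := by simpa using hq
  rw [eLpNorm_eq_lintegral_rpow_enorm_toReal hq0 ENNReal.ofReal_ne_top,
    eLpNorm_eq_lintegral_rpow_enorm_toReal hq0 ENNReal.ofReal_ne_top,
    ENNReal.toReal_ofReal hq.le]
  calc (∫⁻ x, ‖f x‖ₑ ^ q ∂μ) ^ (1 / q)
      ≤ (∫⁻ x, (∫⁻ y, K x y * ‖g y‖ₑ ∂ν) ^ q ∂μ) ^ (1 / q) := by
        gcongr ?_ ^ _
        exact lintegral_mono_ae (hfg.mono fun x hx => by gcongr)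
    _ ≤ (A ^ (q / p) * B * ∫⁻ y, ‖g y‖ₑ ^ q ∂ν) ^ (1 / q) := by
        gcongr
        exact lintegral_rpow_lintegral_mul_le_of_schur hpq hK hg.enorm hA hB
    _ = A ^ (1 / p) * B ^ (1 / q) * (∫⁻ y, ‖g y‖ₑ ^ q ∂ν) ^ (1 / q) := by
        rw [ENNReal.mul_rpow_of_nonneg _ _ (by positivity),
          ENNReal.mul_rpow_of_nonneg _ _ (by positivity), ← ENNReal.rpow_mul]
        congr 3
        field_simp

end SchurTest

noncomputable def heatKernel1D (xn t : ℝ) : ℝ :=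
  (4 * π * t) ^ (-(1 / 2 : ℝ)) * rexp (-xn ^ 2 / (4 * t))

theorem heatKernelHalf_nonneg (m : ℕ) (z : EuclideanSpace ℝ (Fin m)) (xn : ℝ) {t : ℝ}
    (ht : 0 ≤ t) : 0 ≤ heatKernelHalf m z xn t :=
  mul_nonneg (rpow_nonneg (by positivity) _) (exp_nonneg _)

theorem heatKernel1D_nonneg (xn : ℝ) {t : ℝ} (ht : 0 ≤ t) : 0 ≤ heatKernel1D xn t :=
  mul_nonneg (rpow_nonneg (by positivity) _) (exp_nonneg _)

theorem heatKernelHalf_eq_heatKernel1D_mul (m : ℕ) (z : EuclideanSpace ℝ (Fin m)) (xn : ℝ)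
    {t : ℝ} (ht : 0 < t) :
    heatKernelHalf m z xn t =
      heatKernel1D xn t * ((4 * π * t) ^ (-(m / 2 : ℝ)) * rexp (-(4 * t)⁻¹ * ‖z‖ ^ 2)) := by
  have h4 : 0 < 4 * π * t := by positivity
  rw [heatKernelHalf, heatKernel1D, mul_mul_mul_comm, ← rpow_add h4, ← exp_add]
  congr 2
  · ring
  · field_simp
    ring

theorem lintegral_heatKernelHalf (m : ℕ) (xn : ℝ) {t : ℝ} (ht : 0 < t) :
    ∫⁻ z, ENNReal.ofReal (heatKernelHalf m z xn t) = ENNReal.ofReal (heatKernel1D xn t) := by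
  have hb : 0 < (4 * t)⁻¹ := by positivity
  have gauss_mass : ∫ z : EuclideanSpace ℝ (Fin m),
      (4 * π * t) ^ (-(m / 2 : ℝ)) * rexp (-(4 * t)⁻¹ * ‖z‖ ^ 2) = 1 := by
    rw [integral_const_mul, GaussianFourier.integral_rexp_neg_mul_sq_norm hb,
      finrank_euclideanSpace_fin, show π / (4 * t)⁻¹ = 4 * π * t by field_simp,
      ← rpow_add (by positivity)]
    simp
  simp_rw [heatKernelHalf_eq_heatKernel1D_mul m _ xn ht]
  rw [← ofReal_integral_eq_lintegral_ofReal, integral_const_mul, gauss_mass, mul_one]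
  · exact (Integrable.of_integral_ne_zero (by rw [gauss_mass]; exact one_ne_zero)).const_mul _
  · exact Filter.Eventually.of_forall fun z =>
      mul_nonneg (heatKernel1D_nonneg xn ht.le) (by positivity)

theorem lintegral_Ioi_heatKernel1D {t : ℝ} (ht : 0 < t) :
    ∫⁻ xn in Set.Ioi 0, ENNReal.ofReal (heatKernel1D xn t) = ENNReal.ofReal (1 / 2) := by
  have hb : 0 < (4 * t)⁻¹ := by positivity
  have hexp : ∀ xn : ℝ, -xn ^ 2 / (4 * t) = -(4 * t)⁻¹ * xn ^ 2 := fun xn => by ring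
  rw [← ofReal_integral_eq_lintegral_ofReal]
  · simp_rw [heatKernel1D, hexp]
    rw [integral_const_mul, integral_gaussian_Ioi, show π / (4 * t)⁻¹ = 4 * π * t by field_simp,
      sqrt_eq_rpow, ← mul_div_assoc, ← rpow_add (by positivity)]
    norm_num
  · simp_rw [heatKernel1D, hexp]
    exact (integrable_exp_neg_mul_sq hb).integrableOn.const_mul _
  · exact Filter.Eventually.of_forall fun xn => heatKernel1D_nonneg xn ht.le

theorem heatKernel1D_le (xn : ℝ) {t : ℝ} (ht : 0 < t) :
    heatKernel1D xn t ≤ t ^ (-(1 / 2 : ℝ)) / 2 := by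
  have exp_le_one : rexp (-xn ^ 2 / (4 * t)) ≤ 1 :=
    exp_le_one_iff.2 (div_nonpos_of_nonpos_of_nonneg (by nlinarith) (by positivity))
  have four_pi : (4 * π) ^ (-(1 / 2 : ℝ)) ≤ 1 / 2 := calc
    (4 * π) ^ (-(1 / 2 : ℝ)) ≤ 4 ^ (-(1 / 2 : ℝ)) :=
      rpow_le_rpow_of_nonpos (by norm_num) (by linarith [pi_gt_three]) (by norm_num)
    _ = 1 / 2 := by
      rw [show (4 : ℝ) = 2 ^ (2 : ℝ) by norm_num, ← rpow_mul (by norm_num)]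
      norm_num
  calc heatKernel1D xn t ≤ (4 * π) ^ (-(1 / 2 : ℝ)) * t ^ (-(1 / 2 : ℝ)) := by
        rw [heatKernel1D, ← mul_rpow (by positivity) ht.le]
        exact mul_le_of_le_one_right (by positivity) exp_le_one
    _ ≤ 1 / 2 * t ^ (-(1 / 2 : ℝ)) := by gcongr
    _ = t ^ (-(1 / 2 : ℝ)) / 2 := by ring

theorem integral_Ioo_sub_rpow_neg_half {t : ℝ} (ht : 0 ≤ t) :
    ∫ s in Set.Ioo 0 t, (t - s) ^ (-(1 / 2 : ℝ)) = 2 * √t := by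
  rw [← integral_Ioc_eq_integral_Ioo, ← intervalIntegral.integral_of_le ht,
    intervalIntegral.integral_comp_sub_left (fun u => u ^ (-(1 / 2 : ℝ))), sub_self, sub_zero,
    integral_rpow (Or.inl (by norm_num)), zero_rpow (by norm_num), sqrt_eq_rpow]
  norm_num
  ring

theorem lintegral_Ioo_heatKernel1D_sub_le (xn t : ℝ) :
    ∫⁻ s in Set.Ioo 0 t, ENNReal.ofReal (heatKernel1D xn (t - s)) ≤ ENNReal.ofReal (√t) := by
  rcases le_or_gt t 0 with ht | ht
  · simp [Set.Ioo_eq_empty (not_lt.2 ht)]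
  have hint : IntegrableOn (fun s => (t - s) ^ (-(1 / 2 : ℝ))) (Set.Ioo 0 t) := by
    rw [← intervalIntegrable_iff_integrableOn_Ioo_of_le ht.le]
    simpa using ((intervalIntegral.intervalIntegrable_rpow' (r := -(1 / 2 : ℝ))
      (a := 0) (b := t) (by norm_num)).comp_sub_left t).symm
  calc ∫⁻ s in Set.Ioo 0 t, ENNReal.ofReal (heatKernel1D xn (t - s))
      ≤ ∫⁻ s in Set.Ioo 0 t, ENNReal.ofReal ((t - s) ^ (-(1 / 2 : ℝ)) / 2) := by
        refine setLIntegral_mono' measurableSet_Ioo fun s hs => ?_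
        exact ENNReal.ofReal_le_ofReal (heatKernel1D_le xn (sub_pos.2 hs.2))
    _ = ENNReal.ofReal (√t) := by
        rw [← ofReal_integral_eq_lintegral_ofReal (hint.div_const 2), integral_div,
          integral_Ioo_sub_rpow_neg_half ht.le, mul_div_cancel_left₀ _ two_ne_zero]
        filter_upwards [ae_restrict_mem measurableSet_Ioo] with s hs
        have : 0 ≤ t - s := by linarith [hs.2]
        positivity

section SingleLayer

variable (m : ℕ)

noncomputable abbrev boundaryVolume (T : ℝ) : Measure (EuclideanSpace ℝ (Fin m) × ℝ) :=
  volume.prod (volume.restrict (Set.Ioo 0 T))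

noncomputable abbrev halfSpaceVolume (T : ℝ) : Measure ((EuclideanSpace ℝ (Fin m) × ℝ) × ℝ) :=
  (volume.prod (volume.restrict (Set.Ioi 0))).prod (volume.restrict (Set.Ioo 0 T))

noncomputable def singleLayerKernel (x : (EuclideanSpace ℝ (Fin m) × ℝ) × ℝ)
    (y : EuclideanSpace ℝ (Fin m) × ℝ) : ℝ≥0∞ :=
  if y.2 < x.2 then ENNReal.ofReal (heatKernelHalf m (x.1.1 - y.1) x.1.2 (x.2 - y.2)) else 0

noncomputable def singleLayerPotential (g : EuclideanSpace ℝ (Fin m) × ℝ → ℝ)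
    (x : (EuclideanSpace ℝ (Fin m) × ℝ) × ℝ) : ℝ :=
  ∫ s in Set.Ioo 0 x.2, ∫ y', heatKernelHalf m (x.1.1 - y') x.1.2 (x.2 - s) * g (y', s)

theorem measurable_singleLayerKernel : Measurable (Function.uncurry (singleLayerKernel m)) := by
  unfold singleLayerKernel heatKernelHalf Function.uncurry
  refine Measurable.ite (measurableSet_lt (by fun_prop) (by fun_prop)) ?_ measurable_const
  fun_prop

theorem lintegral_singleLayerKernel_source_space (x : (EuclideanSpace ℝ (Fin m) × ℝ) × ℝ)
    (s : ℝ) :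
    ∫⁻ y', singleLayerKernel m x (y', s) =
      (Set.Iio x.2).indicator (fun s => ENNReal.ofReal (heatKernel1D x.1.2 (x.2 - s))) s := by
  by_cases hs : s < x.2
  · simp only [singleLayerKernel, if_pos hs, Set.indicator_of_mem (Set.mem_Iio.2 hs)]
    rw [lintegral_sub_left_eq_self (fun z => ENNReal.ofReal (heatKernelHalf m z x.1.2 (x.2 - s))),
      lintegral_heatKernelHalf m _ (sub_pos.2 hs)]
  · simp [singleLayerKernel, hs]

theorem lintegral_singleLayerKernel_target_space (y : EuclideanSpace ℝ (Fin m) × ℝ) (t : ℝ) :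
    ∫⁻ zx, singleLayerKernel m (zx, t) y ∂(volume.prod (volume.restrict (Set.Ioi 0))) =
      (Set.Ioi y.2).indicator (fun _ => ENNReal.ofReal (1 / 2)) t := by
  by_cases hs : y.2 < t
  · rw [lintegral_prod_symm (fun zx => singleLayerKernel m (zx, t) y)
      ((measurable_singleLayerKernel m).of_uncurry_right.comp
        (measurable_id.prodMk measurable_const)).aemeasurable]
    simp only [singleLayerKernel, if_pos hs, Set.indicator_of_mem (Set.mem_Ioi.2 hs)]
    calc _ = ∫⁻ xn in Set.Ioi 0, ENNReal.ofReal (heatKernel1D xn (t - y.2)) :=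
          lintegral_congr fun xn => by
            rw [lintegral_sub_right_eq_self
                (fun z => ENNReal.ofReal (heatKernelHalf m z xn (t - y.2))),
              lintegral_heatKernelHalf m xn (sub_pos.2 hs)]
      _ = _ := lintegral_Ioi_heatKernel1D (sub_pos.2 hs)
  · simp [singleLayerKernel, hs]

theorem lintegral_singleLayerKernel_source_le (T : ℝ) (x : (EuclideanSpace ℝ (Fin m) × ℝ) × ℝ) :
    ∫⁻ y, singleLayerKernel m x y ∂boundaryVolume m T ≤ ENNReal.ofReal √x.2 := by
  rw [lintegral_prod_symm _ (measurable_singleLayerKernel m).of_uncurry_left.aemeasurable]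
  simp_rw [lintegral_singleLayerKernel_source_space]
  rw [lintegral_indicator measurableSet_Iio, Measure.restrict_restrict measurableSet_Iio]
  have past : Set.Iio x.2 ∩ Set.Ioo 0 T ⊆ Set.Ioo 0 x.2 := fun s hs => ⟨hs.2.1, hs.1⟩
  exact (lintegral_mono_set past).trans (lintegral_Ioo_heatKernel1D_sub_le _ _)

theorem lintegral_singleLayerKernel_target_le (T : ℝ) (y : EuclideanSpace ℝ (Fin m) × ℝ) :
    ∫⁻ x, singleLayerKernel m x y ∂halfSpaceVolume m T ≤ ENNReal.ofReal T := by
  rw [lintegral_prod_symm _ (measurable_singleLayerKernel m).of_uncurry_right.aemeasurable]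
  simp_rw [lintegral_singleLayerKernel_target_space]
  calc _ ≤ ∫⁻ _ in Set.Ioo 0 T, ENNReal.ofReal (1 / 2) :=
        lintegral_mono (Set.indicator_le_self _ _)
    _ = ENNReal.ofReal (1 / 2) * ENNReal.ofReal T := by
        rw [setLIntegral_const, volume_Ioo, sub_zero]
    _ ≤ ENNReal.ofReal T :=
        mul_le_of_le_one_left' (ENNReal.ofReal_le_one.2 (by norm_num))

theorem enorm_singleLayerPotential_le {T : ℝ} {g : EuclideanSpace ℝ (Fin m) × ℝ → ℝ}
    (hg : AEStronglyMeasurable g (boundaryVolume m T))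
    {x : (EuclideanSpace ℝ (Fin m) × ℝ) × ℝ} (hxT : x.2 ≤ T) :
    ‖singleLayerPotential m g x‖ₑ ≤
      ∫⁻ y, singleLayerKernel m x y * ‖g y‖ₑ ∂boundaryVolume m T := by
  calc ‖singleLayerPotential m g x‖ₑ
      ≤ ∫⁻ s in Set.Ioo 0 x.2, ∫⁻ y',
          ‖heatKernelHalf m (x.1.1 - y') x.1.2 (x.2 - s) * g (y', s)‖ₑ :=
        (enorm_integral_le_lintegral_enorm _).trans
          (lintegral_mono fun s => enorm_integral_le_lintegral_enorm _)
    _ = ∫⁻ s in Set.Ioo 0 x.2, ∫⁻ y', singleLayerKernel m x (y', s) * ‖g (y', s)‖ₑ :=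
        setLIntegral_congr_fun measurableSet_Ioo fun s hs => lintegral_congr fun y' => by
          rw [enorm_mul, singleLayerKernel, if_pos hs.2,
            Real.enorm_eq_ofReal (heatKernelHalf_nonneg m _ _ (sub_pos.2 hs.2).le)]
    _ ≤ ∫⁻ s in Set.Ioo 0 T, ∫⁻ y', singleLayerKernel m x (y', s) * ‖g (y', s)‖ₑ :=
        lintegral_mono_set (Set.Ioo_subset_Ioo_right hxT)
    _ = _ := (lintegral_prod_symm _
        ((measurable_singleLayerKernel m).of_uncurry_left.aemeasurable.mul hg.enorm)).symm

end SingleLayer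

theorem ofReal_sqrt_rpow_mul_ofReal_rpow {p q T : ℝ} (hpq : p.HolderConjugate q) (hT : 0 < T) :
    ENNReal.ofReal √T ^ (1 / p) * ENNReal.ofReal T ^ (1 / q) =
      ENNReal.ofReal (T ^ (1 / (2 * q) + 1 / 2)) := by
  have hp : 1 / p = 1 - 1 / q := by
    rw [one_div, one_div, ← hpq.inv_add_inv_eq_one]; ring
  rw [ENNReal.ofReal_rpow_of_pos (sqrt_pos.2 hT), ENNReal.ofReal_rpow_of_pos hT,
    ← ENNReal.ofReal_mul (by positivity), sqrt_eq_rpow, ← rpow_mul hT.le, ← rpow_add hT, hp]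
  congr 2
  ring

/-- Anisotropic Young estimate for the single-layer heat potential: for `1 < q < ∞` and
`g ∈ L^q(ℝ^{n-1} × (0,T))`, the potential
`w(x,t) = ∫₀ᵗ ∫ Γ(x'-y', x_n, t-s) g(y',s) dy' ds` satisfies
`‖w‖_{L^q(ℝⁿ₊×(0,T))} ≤ c T^{1/(2q)+1/2} ‖g‖_{L^q(ℝ^{n-1}×(0,T))}`. -/
theorem single_layer_heat_potential_estimate (m : ℕ) (q : ℝ) (hq : 1 < q) :
    ∃ c : ℝ, 0 < c ∧ ∀ (T : ℝ), 0 < T →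
      ∀ g : EuclideanSpace ℝ (Fin m) × ℝ → ℝ,
      MemLp g (ENNReal.ofReal q)
        ((volume : Measure (EuclideanSpace ℝ (Fin m))).prod
          ((volume : Measure ℝ).restrict (Set.Ioo 0 T))) →
      eLpNorm (fun zt : (EuclideanSpace ℝ (Fin m) × ℝ) × ℝ =>
          ∫ s in Set.Ioo (0 : ℝ) zt.2, ∫ y' : EuclideanSpace ℝ (Fin m),
            heatKernelHalf m (zt.1.1 - y') zt.1.2 (zt.2 - s) * g (y', s))
        (ENNReal.ofReal q)
        ((((volume : Measure (EuclideanSpace ℝ (Fin m))).prod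
            ((volume : Measure ℝ).restrict (Set.Ioi 0)))).prod
          ((volume : Measure ℝ).restrict (Set.Ioo 0 T)))
      ≤ ENNReal.ofReal (c * T ^ (1 / (2 * q) + 1 / 2)) *
          eLpNorm g (ENNReal.ofReal q)
            ((volume : Measure (EuclideanSpace ℝ (Fin m))).prod
              ((volume : Measure ℝ).restrict (Set.Ioo 0 T))) := by
  refine ⟨1, one_pos, fun T hT g hg => ?_⟩
  have hpq : (q / (q - 1)).HolderConjugate q := (Real.HolderConjugate.conjExponent hq).symm
  have time_le : ∀ᵐ x ∂halfSpaceVolume m T, x.2 ≤ T :=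
    Measure.quasiMeasurePreserving_snd.ae
      ((ae_restrict_mem measurableSet_Ioo).mono fun t ht => ht.2.le)
  calc eLpNorm (singleLayerPotential m g) _ _
      ≤ ENNReal.ofReal √T ^ (1 / (q / (q - 1))) * ENNReal.ofReal T ^ (1 / q) *
          eLpNorm g (ENNReal.ofReal q) _ :=
        eLpNorm_le_of_schur hpq (measurable_singleLayerKernel m) hg.1
          (time_le.mono fun x hx => enorm_singleLayerPotential_le m hg.1 hx)
          (time_le.mono fun x hx => (lintegral_singleLayerKernel_source_le m T x).trans
            (ENNReal.ofReal_le_ofReal (sqrt_le_sqrt hx)))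
          (ae_of_all _ (lintegral_singleLayerKernel_target_le m T))
    _ = _ := by rw [ofReal_sqrt_rpow_mul_ofReal_rpow hpq hT, one_mul]
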